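/- arXiv:2304.03484 — 2 statements merged into one kernel-verified Lean document; each statement's English description precedes it below -/
import Mathlib

section
/- Let C ⊆ ℝ² be a bounded convex set and let a, b ∈ C be a diametral pair, i.e., dist(a,b) = diam₂(C). Then for every point c ∈ C with c ≠ a and c ≠ b, the angle ∠(a, c, b) at the vertex c is at least π/3. -/
open Set Metric ENNReal RealInnerProductSpace

noncomputable section

/-- The Euclidean plane. -/
abbrev Plane := EuclideanSpace ℝ (Fin 2)

/-- A convex polygon: the convex hull of a nonempty finite point set. -/
def IsConvexPolygon (Q : Set Plane) : Prop :=
  ∃ S : Finset Plane, S.Nonempty ∧ Q = convexHull ℝ (S : Set Plane)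

/-- `γ` is a continuous path from `s` to `t` (parametrized on `[0,1]`) with image in `P`. -/
def IsPathIn (P : Set Plane) (γ : ℝ → Plane) (s t : Plane) : Prop :=
  ContinuousOn γ (Set.Icc 0 1) ∧ γ 0 = s ∧ γ 1 = t ∧ Set.MapsTo γ (Set.Icc 0 1) P

/-- Length of a path: its total variation on `[0,1]`. -/
def pathLen (γ : ℝ → Plane) : ℝ≥0∞ := eVariationOn γ (Set.Icc 0 1)

/-- Geodesic distance inside `P`: infimum of lengths of continuous paths
from `s` to `t` contained in `P`. -/
def geod (P : Set Plane) (s t : Plane) : ℝ≥0∞ :=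
  ⨅ γ : {γ : ℝ → Plane // IsPathIn P γ s t}, pathLen γ.1

/-- Geodesic diameter of `P`. -/
def geodDiam (P : Set Plane) : ℝ≥0∞ :=
  ⨆ s ∈ P, ⨆ t ∈ P, geod P s t

/-- The width of a planar set: the minimum, over unit directions `v`,
of the extent of `C` in direction `v`. -/
def setWidth (C : Set Plane) : ℝ :=
  ⨅ v : {v : Plane // ‖v‖ = 1},
    (sSup ((fun x => ⟪x, v.1⟫) '' C) - sInf ((fun x => ⟪x, v.1⟫) '' C))

/-- Let `C ⊆ ℝ²` be a bounded convex set and `a, b ∈ C` a diametral pair,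
i.e. `dist a b = diam₂ C`. Then every `c ∈ C` with `c ≠ a` and `c ≠ b` satisfies
`∠(a, c, b) ≥ π/3`. -/
theorem angle_at_least_pi_div_three
    (C : Set Plane) (hbd : Bornology.IsBounded C) (hconv : Convex ℝ C)
    (a b : Plane) (ha : a ∈ C) (hb : b ∈ C)
    (hdiam : dist a b = Metric.diam C) :
    ∀ c ∈ C, c ≠ a → c ≠ b → Real.pi / 3 ≤ EuclideanGeometry.angle a c b := by
  intro c hc hca hcb
  set θ := EuclideanGeometry.angle a c b with hθ
  have hac : dist a c ≤ dist a b := hdiam ▸ Metric.dist_le_diam_of_mem hbd ha hc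
  have hbc : dist b c ≤ dist a b := hdiam ▸ Metric.dist_le_diam_of_mem hbd hb hc
  have hacpos : 0 < dist a c := dist_pos.2 (fun h => hca h.symm)
  have hbcpos : 0 < dist b c := dist_pos.2 (fun h => hcb h.symm)
  have hlaw := EuclideanGeometry.law_cos a c b
  have hcos : Real.cos θ ≤ 1 / 2 := by
    rw [hθ]
    rcases le_total (dist a c) (dist b c) with h' | h' <;>
      nlinarith [hlaw, hac, hbc, hacpos, hbcpos, mul_pos hacpos hbcpos]
  by_contra h
  push_neg at h
  have h0 : 0 ≤ θ := EuclideanGeometry.angle_nonneg a c b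
  have hcosgt : 1 / 2 < Real.cos θ := by
    have := Real.cos_lt_cos_of_nonneg_of_le_pi h0
      (by linarith [Real.pi_pos] : Real.pi / 3 ≤ Real.pi) h
    rwa [Real.cos_pi_div_three] at this
  linarith
end
end

section
/- Let h be a natural number and let P = P₀ \ ⋃_{i=1}^h interior(Pᵢ), where P₀ is a convex polygon in ℝ² and each hole Pᵢ is a closed axis-aligned rectangle [aᵢ, bᵢ] × [cᵢ, dᵢ] with nonempty interior, the rectangles being pairwise disjoint and contained in the interior of P₀. Then for every point s ∈ P there exists a continuous path γ : [0,1] → ℝ² with γ(0) = s, γ(1) ∈ frontier(P₀), image of γ contained in P, and length at most diam₂(P). -/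
open Set Metric ENNReal RealInnerProductSpace

noncomputable section

/-!
From any point `s` of the domain there is an up-left staircase to the outer boundary: climb
vertically; when the lowest hole straight above blocks the way, walk left along its bottom edge,
climb its left edge, and go on. Every detour leaves one more hole entirely below the current
height, so this terminates. Being monotone in both coordinates, the staircase from `s` to its end
`q₁` has length `(q₁ - s)_y + (s - q₁)_x`. Reflecting through the origin gives a down-right
staircase to some `q₂`. Both `q₁` and `q₂` lie in the domain, and the two lengths add up to at
most `|q₁ - q₂|_x + |q₁ - q₂|_y ≤ 2 |q₁ - q₂| ≤ 2 diam`, so the shorter staircase will do.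
-/

open Filter Topology

section Neg

variable {G : Type*} [TopologicalSpace G] [InvolutiveNeg G] [ContinuousNeg G]

lemma neg_interior (s : Set G) : -interior s = interior (-s) :=
  (Homeomorph.neg G).preimage_interior s

lemma neg_frontier (s : Set G) : -frontier s = frontier (-s) :=
  (Homeomorph.neg G).preimage_frontier s

end Neg

lemma abs_sub_apply_le_dist (p q : Plane) (i : Fin 2) : |p i - q i| ≤ dist p q := by
  simpa [Real.dist_eq] using PiLp.dist_apply_le p q i

lemma dist_eq_abs_of_apply_zero_eq {p q : Plane} (h : p 0 = q 0) : dist p q = |p 1 - q 1| := by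
  simp [EuclideanSpace.dist_eq, Fin.sum_univ_two, h, Real.dist_eq, Real.sqrt_sq_eq_abs]

lemma dist_eq_abs_of_apply_one_eq {p q : Plane} (h : p 1 = q 1) : dist p q = |p 0 - q 0| := by
  simp [EuclideanSpace.dist_eq, Fin.sum_univ_two, h, Real.dist_eq, Real.sqrt_sq_eq_abs]

lemma apply_mem_uIcc_of_mem_segment {ι : Type*} {p q z : EuclideanSpace ℝ ι}
    (hz : z ∈ segment ℝ p q) (i : ι) : z i ∈ uIcc (p i) (q i) := by
  have h := image_segment ℝ
    (EuclideanSpace.proj i : EuclideanSpace ℝ ι →L[ℝ] ℝ).toLinearMap.toAffineMap p q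
  rw [← segment_eq_uIcc]
  simpa using h ▸ mem_image_of_mem _ hz

lemma exists_add_smul_mem_frontier {E : Type*} [NormedAddCommGroup E] [NormedSpace ℝ E]
    {K : Set E} (hK : IsCompact K) {p v : E} (hp : p ∈ K) (hv : v ≠ 0) :
    ∃ t : ℝ, 0 ≤ t ∧ p + t • v ∈ frontier K := by
  set A := {t : ℝ | 0 ≤ t ∧ p + t • v ∈ K}
  have hf : Continuous fun t : ℝ => p + t • v := by fun_prop
  have hA_closed : IsClosed A := isClosed_Ici.inter (hK.isClosed.preimage hf)
  obtain ⟨r, hr⟩ := hK.isBounded.subset_closedBall p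
  have hA_bdd : BddAbove A := ⟨r / ‖v‖, fun t ht => by
    rw [le_div_iff₀ (norm_pos_iff.2 hv)]
    simpa [dist_eq_norm, norm_smul, abs_of_nonneg ht.1] using hr ht.2⟩
  set T := sSup A
  have hT : T ∈ A := hA_closed.csSup_mem ⟨0, le_rfl, by simpa using hp⟩ hA_bdd
  refine ⟨T, hT.1, hK.isClosed.frontier_eq ▸ ⟨hT.2, fun hint => ?_⟩⟩
  have hnear : ∀ᶠ t in 𝓝[>] T, p + t • v ∈ K :=
    (((hf.tendsto T).eventually (isOpen_interior.mem_nhds hint)).filter_mono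
      nhdsWithin_le_nhds).mono fun _ ht => interior_subset ht
  obtain ⟨t, htK, hgt⟩ := (hnear.and self_mem_nhdsWithin).exists
  exact (le_csSup hA_bdd ⟨hT.1.trans hgt.le, htK⟩).not_gt hgt

section Concatenation

variable {E : Type*}

def concatPath (γ₁ γ₂ : ℝ → E) (t : ℝ) : E :=
  if t ≤ 1 / 2 then γ₁ (2 * t) else γ₂ (2 * t - 1)

lemma ContinuousOn.concatPath [TopologicalSpace E] {γ₁ γ₂ : ℝ → E}
    (h₁ : ContinuousOn γ₁ (Icc 0 1)) (h₂ : ContinuousOn γ₂ (Icc 0 1)) (h : γ₁ 1 = γ₂ 0) :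
    ContinuousOn (concatPath γ₁ γ₂) (Icc 0 1) := by
  apply ContinuousOn.if
  · rintro t ⟨-, ht⟩
    rw [show {t : ℝ | t ≤ 1 / 2} = Iic (1 / 2) from rfl, frontier_Iic, mem_singleton_iff] at ht
    norm_num [ht, h]
  · refine h₁.comp (by fun_prop) fun t ⟨ht, hle⟩ => ?_
    rw [show {t : ℝ | t ≤ 1 / 2} = Iic (1 / 2) from rfl, closure_Iic] at hle
    exact ⟨by linarith [ht.1], by linarith [hle.out]⟩
  · refine h₂.comp (by fun_prop) fun t ⟨ht, hgt⟩ => ?_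
    rw [show {t : ℝ | ¬t ≤ 1 / 2} = Ioi (1 / 2) by ext; simp, closure_Ioi] at hgt
    exact ⟨by linarith [hgt.out], by linarith [ht.2]⟩

lemma eVariationOn_comp_mul_add [PseudoEMetricSpace E] (f : ℝ → E) {a : ℝ} (ha : 0 < a)
    (b c d : ℝ) :
    eVariationOn (fun t => f (a * t + b)) (Icc c d) =
      eVariationOn f (Icc (a * c + b) (a * d + b)) := by
  rw [← image_affine_Icc' ha]
  exact eVariationOn.comp_eq_of_monotoneOn f _ fun _ _ _ _ hxy => by gcongr

lemma eVariationOn_concatPath [PseudoEMetricSpace E] {γ₁ γ₂ : ℝ → E} (h : γ₁ 1 = γ₂ 0) :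
    eVariationOn (concatPath γ₁ γ₂) (Icc 0 1) =
      eVariationOn γ₁ (Icc 0 1) + eVariationOn γ₂ (Icc 0 1) := by
  have first : EqOn (concatPath γ₁ γ₂) (fun t => γ₁ (2 * t + 0)) (Icc 0 (1 / 2)) :=
    fun t ht => by simp only [concatPath, if_pos ht.2, add_zero]
  have second : EqOn (concatPath γ₁ γ₂) (fun t => γ₂ (2 * t + -1)) (Icc (1 / 2) 1) := by
    intro t ht
    rcases ht.1.eq_or_lt with rfl | hlt
    · simp [concatPath, h]
    · simp only [concatPath, if_neg hlt.not_ge, sub_eq_add_neg]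
  have split := eVariationOn.Icc_add_Icc (s := univ) (concatPath γ₁ γ₂)
    (by norm_num : (0 : ℝ) ≤ 1 / 2) (by norm_num : (1 / 2 : ℝ) ≤ 1) (mem_univ _)
  simp only [univ_inter] at split
  rw [← split, eVariationOn.eq_of_eqOn first, eVariationOn.eq_of_eqOn second,
    eVariationOn_comp_mul_add _ two_pos, eVariationOn_comp_mul_add _ two_pos]
  norm_num

end Concatenation

def PathLE (S : Set Plane) (p q : Plane) (L : ℝ) : Prop :=
  ∃ γ : ℝ → Plane, IsPathIn S γ p q ∧ pathLen γ ≤ ENNReal.ofReal L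

namespace PathLE

variable {S : Set Plane} {p q r : Plane} {L L' : ℝ}

lemma mono (h : PathLE S p q L) (hL : L ≤ L') : PathLE S p q L' :=
  let ⟨γ, hγ, hlen⟩ := h
  ⟨γ, hγ, hlen.trans (ofReal_le_ofReal hL)⟩

lemma of_segment_subset (h : segment ℝ p q ⊆ S) : PathLE S p q (dist p q) := by
  refine ⟨AffineMap.lineMap p q, ⟨AffineMap.lineMap_continuous.continuousOn, by simp, by simp,
    fun t ht => h ?_⟩, ?_⟩
  · rw [segment_eq_image_lineMap]; exact mem_image_of_mem _ ht
  · calc pathLen (AffineMap.lineMap p q)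
        = eVariationOn (AffineMap.lineMap p q ∘ id) (Icc (0 : ℝ) 1) := rfl
      _ ≤ nndist p q * eVariationOn id (Icc (0 : ℝ) 1) :=
        (lipschitzWith_lineMap p q).lipschitzOnWith.comp_eVariationOn_le (mapsTo_univ _ _)
      _ = ENNReal.ofReal (dist p q) := by simp [edist_dist]

lemma trans (h₁ : PathLE S p q L) (h₂ : PathLE S q r L') (hL : 0 ≤ L) (hL' : 0 ≤ L') :
    PathLE S p r (L + L') := by
  obtain ⟨γ₁, ⟨hc₁, h0₁, h1₁, hm₁⟩, hlen₁⟩ := h₁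
  obtain ⟨γ₂, ⟨hc₂, h0₂, h1₂, hm₂⟩, hlen₂⟩ := h₂
  have hjoin : γ₁ 1 = γ₂ 0 := h1₁.trans h0₂.symm
  refine ⟨concatPath γ₁ γ₂, ⟨hc₁.concatPath hc₂ hjoin, by simp [concatPath, h0₁],
    by norm_num [concatPath, h1₂], fun t ht => ?_⟩, ?_⟩
  · unfold concatPath
    split_ifs with hle
    · exact hm₁ ⟨by linarith [ht.1], by linarith⟩
    · exact hm₂ ⟨by linarith, by linarith [ht.2]⟩
  · rw [pathLen, eVariationOn_concatPath hjoin, ofReal_add hL hL']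
    exact add_le_add hlen₁ hlen₂

lemma neg (h : PathLE S p q L) : PathLE (-S) (-p) (-q) L := by
  obtain ⟨γ, ⟨hc, h0, h1, hm⟩, hlen⟩ := h
  refine ⟨fun t => -γ t, ⟨hc.neg, by simp [h0], by simp [h1], fun t ht => by simpa using hm ht⟩, ?_⟩
  simpa [pathLen, eVariationOn, edist_neg_neg] using hlen

end PathLE

def box (a b c d : ℝ) : Set Plane := {p | p 0 ∈ Icc a b ∧ p 1 ∈ Icc c d}

lemma box_eq_preimage_pi (a b c d : ℝ) :
    box a b c d = EuclideanSpace.equiv (Fin 2) ℝ ⁻¹' univ.pi ![Icc a b, Icc c d] := by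
  ext p; simp [box, Fin.forall_fin_two]

lemma interior_box (a b c d : ℝ) :
    interior (box a b c d) = {p | p 0 ∈ Ioo a b ∧ p 1 ∈ Ioo c d} := by
  let e := EuclideanSpace.equiv (Fin 2) ℝ
  rw [box_eq_preimage_pi, ← e.isOpenMap.preimage_interior_eq_interior_preimage e.continuous,
    interior_pi_set finite_univ]
  ext p; simp [e, Fin.forall_fin_two]

lemma neg_box (a b c d : ℝ) : -box a b c d = box (-b) (-a) (-d) (-c) := by
  ext p; simp [box, ← neg_Icc]

structure BoxHoleDomain (ι : Type*) where
  outer : Set Plane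
  a : ι → ℝ
  b : ι → ℝ
  c : ι → ℝ
  d : ι → ℝ
  convex_outer : Convex ℝ outer
  isCompact_outer : IsCompact outer
  a_le_b : ∀ i, a i ≤ b i
  c_lt_d : ∀ i, c i < d i
  pairwise_disjoint : Pairwise (Function.onFun Disjoint fun i => box (a i) (b i) (c i) (d i))
  box_subset_interior : ∀ i, box (a i) (b i) (c i) (d i) ⊆ interior outer

namespace BoxHoleDomain

variable {ι : Type*} (D : BoxHoleDomain ι)

def hole (i : ι) : Set Plane := box (D.a i) (D.b i) (D.c i) (D.d i)

def carrier : Set Plane := D.outer \ ⋃ i, interior (D.hole i)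

variable {D}

lemma mem_carrier {p : Plane} :
    p ∈ D.carrier ↔ p ∈ D.outer ∧ ∀ k, p 0 ∈ Ioo (D.a k) (D.b k) → p 1 ∉ Ioo (D.c k) (D.d k) := by
  simp [carrier, hole, interior_box]

lemma frontier_outer_subset_carrier : frontier D.outer ⊆ D.carrier := fun p hp =>
  ⟨D.isCompact_outer.isClosed.frontier_subset hp, fun hmem => by
    obtain ⟨k, hk⟩ := mem_iUnion.1 hmem
    exact hp.2 (D.box_subset_interior k (interior_subset hk))⟩

lemma mem_carrier_of_mem_hole {i : ι} {z : Plane} (hz : z ∈ D.hole i)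
    (hzi : z ∉ interior (D.hole i)) : z ∈ D.carrier := by
  refine ⟨interior_subset (D.box_subset_interior i hz), fun hmem => ?_⟩
  obtain ⟨k, hk⟩ := mem_iUnion.1 hmem
  rcases eq_or_ne k i with rfl | hki
  · exact hzi hk
  · exact Set.disjoint_left.1 (D.pairwise_disjoint hki) (interior_subset hk) hz

lemma segment_subset_carrier_of_apply_zero_eq {p q : Plane} (hp : p ∈ D.carrier)
    (hq : q ∈ D.outer) (hq0 : q 0 = p 0) (hpq : p 1 ≤ q 1)
    (hbelow : ∀ k, p 0 ∈ Ioo (D.a k) (D.b k) → p 1 ≤ D.c k → q 1 ≤ D.c k) :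
    segment ℝ p q ⊆ D.carrier := by
  intro z hz
  have hz0 : z 0 = p 0 := by simpa [hq0] using apply_mem_uIcc_of_mem_segment hz 0
  have hz1 : z 1 ∈ Icc (p 1) (q 1) := by
    simpa [uIcc_of_le hpq] using apply_mem_uIcc_of_mem_segment hz 1
  refine mem_carrier.2 ⟨D.convex_outer.segment_subset (mem_carrier.1 hp).1 hq hz,
    fun k hk0 hk1 => ?_⟩
  rw [hz0] at hk0
  by_cases hck : p 1 ≤ D.c k
  · linarith [hbelow k hk0 hck, hk1.1, hz1.2]
  · exact (mem_carrier.1 hp).2 k hk0 ⟨not_le.1 hck, hz1.1.trans_lt hk1.2⟩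

lemma exists_pathLE_up_to_frontier {p : Plane} (hp : p ∈ D.carrier)
    (hfree : ∀ k, p 0 ∈ Ioo (D.a k) (D.b k) → D.c k < p 1) :
    ∃ q ∈ frontier D.outer, q 0 = p 0 ∧ p 1 ≤ q 1 ∧ PathLE D.carrier p q (q 1 - p 1) := by
  obtain ⟨t, ht, hq⟩ := exists_add_smul_mem_frontier D.isCompact_outer (mem_carrier.1 hp).1
    (by simp : EuclideanSpace.single (1 : Fin 2) (1 : ℝ) ≠ 0)
  set q := p + t • EuclideanSpace.single (1 : Fin 2) (1 : ℝ)
  have hq0 : q 0 = p 0 := by simp [q]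
  have hq1 : q 1 = p 1 + t := by simp [q]
  have hseg := segment_subset_carrier_of_apply_zero_eq hp
    (D.isCompact_outer.isClosed.frontier_subset hq) hq0 (by linarith)
    fun k hk hck => absurd (hfree k hk) hck.not_gt
  refine ⟨q, hq, hq0, by linarith, (PathLE.of_segment_subset hseg).mono ?_⟩
  rw [dist_eq_abs_of_apply_zero_eq hq0.symm]
  exact abs_le.2 ⟨by linarith, by linarith⟩

lemma pathLE_around_hole {p : Plane} (hp : p ∈ D.carrier) {i : ι}
    (hi : p 0 ∈ Ioo (D.a i) (D.b i)) (hpi : p 1 ≤ D.c i)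
    (hlowest : ∀ k, p 0 ∈ Ioo (D.a k) (D.b k) → p 1 ≤ D.c k → D.c i ≤ D.c k) :
    PathLE D.carrier p !₂[D.a i, D.d i] (D.c i - p 1 + (p 0 - D.a i) + (D.d i - D.c i)) := by
  have hcd := D.c_lt_d i
  have hbottom : !₂[p 0, D.c i] ∈ D.hole i := by
    simp [hole, box, hi.1.le, hi.2.le, hcd.le]
  have hup : PathLE D.carrier p !₂[p 0, D.c i] (D.c i - p 1) := by
    refine (PathLE.of_segment_subset (segment_subset_carrier_of_apply_zero_eq hp
      (interior_subset (D.box_subset_interior i hbottom)) (by simp) (by simpa using hpi)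
      fun k hk hck => by simpa using hlowest k hk hck)).mono ?_
    rw [dist_eq_abs_of_apply_zero_eq (by simp)]
    simpa using abs_le.2 ⟨by linarith, by linarith⟩
  have hleft : PathLE D.carrier !₂[p 0, D.c i] !₂[D.a i, D.c i] (p 0 - D.a i) := by
    refine (PathLE.of_segment_subset fun z hz => ?_).mono ?_
    · have hz0 : z 0 ∈ Icc (D.a i) (p 0) := by
        simpa [uIcc_of_ge hi.1.le] using apply_mem_uIcc_of_mem_segment hz 0
      have hz1 : z 1 = D.c i := by simpa using apply_mem_uIcc_of_mem_segment hz 1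
      refine mem_carrier_of_mem_hole (i := i)
        ⟨⟨hz0.1, hz0.2.trans hi.2.le⟩, by simp [hz1, hcd.le]⟩ ?_
      simp [hole, interior_box, hz1]
    · rw [dist_eq_abs_of_apply_one_eq (by simp)]
      simpa using abs_le.2 ⟨by linarith [hi.1], by linarith [hi.1]⟩
  have hside : PathLE D.carrier !₂[D.a i, D.c i] !₂[D.a i, D.d i] (D.d i - D.c i) := by
    refine (PathLE.of_segment_subset fun z hz => ?_).mono ?_
    · have hz0 : z 0 = D.a i := by simpa using apply_mem_uIcc_of_mem_segment hz 0
      have hz1 : z 1 ∈ Icc (D.c i) (D.d i) := by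
        simpa [uIcc_of_le hcd.le] using apply_mem_uIcc_of_mem_segment hz 1
      refine mem_carrier_of_mem_hole (i := i) ⟨by simp [hz0, D.a_le_b i], hz1⟩ ?_
      simp [hole, interior_box, hz0]
    · rw [dist_eq_abs_of_apply_zero_eq (by simp)]
      simpa using abs_le.2 ⟨by linarith, by linarith⟩
  exact (hup.trans hleft (by linarith) (by linarith [hi.1])).trans hside
    (by linarith [hi.1]) (by linarith)

variable (D) in
def holesAbove [Fintype ι] (y : ℝ) : Finset ι := Finset.univ.filter fun k => y < D.d k

variable (D) in
lemma card_holesAbove_lt [Fintype ι] {y : ℝ} {i : ι} (hy : y ≤ D.c i) :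
    (D.holesAbove (D.d i)).card < (D.holesAbove y).card := by
  have hcd := D.c_lt_d i
  refine Finset.card_lt_card (Finset.ssubset_iff_of_subset (fun k hk => ?_) |>.2 ⟨i, ?_, ?_⟩)
  · simp only [holesAbove, Finset.mem_filter, Finset.mem_univ, true_and] at hk ⊢
    linarith
  · simpa [holesAbove] using hy.trans_lt hcd
  · simp [holesAbove]

lemma exists_escape_up_left [Fintype ι] {p : Plane} (hp : p ∈ D.carrier) :
    ∃ q ∈ frontier D.outer, q 0 ≤ p 0 ∧ p 1 ≤ q 1 ∧
      PathLE D.carrier p q (q 1 - p 1 + (p 0 - q 0)) := by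
  classical
  induction hN : (D.holesAbove (p 1)).card using Nat.strong_induction_on generalizing p with
  | _ N ih =>
    by_cases hfree : ∀ k, p 0 ∈ Ioo (D.a k) (D.b k) → D.c k < p 1
    · obtain ⟨q, hq, hq0, hq1, hpath⟩ := exists_pathLE_up_to_frontier hp hfree
      exact ⟨q, hq, hq0.le, hq1, hpath.mono (by rw [hq0]; linarith)⟩
    push Not at hfree
    obtain ⟨k₀, hk₀⟩ := hfree
    obtain ⟨i, hi, hlowest⟩ :=
      Finset.exists_min_image {k | p 0 ∈ Ioo (D.a k) (D.b k) ∧ p 1 ≤ D.c k} D.c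
        ⟨k₀, by simpa using hk₀⟩
    simp only [Finset.mem_filter, Finset.mem_univ, true_and] at hi hlowest
    have hcd := D.c_lt_d i
    have hcorner : !₂[D.a i, D.d i] ∈ D.carrier :=
      mem_carrier_of_mem_hole (i := i) (by simp [hole, box, D.a_le_b i, hcd.le])
        (by simp [hole, interior_box])
    have hfewer : (D.holesAbove (D.d i)).card < N := hN ▸ D.card_holesAbove_lt hi.2
    obtain ⟨q, hq, hq0, hq1, hpath⟩ := ih _ hfewer hcorner (by simp)
    simp only [Matrix.cons_val_zero, Matrix.cons_val_one] at hq0 hq1 hpath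
    refine ⟨q, hq, by linarith [hi.1.1], by linarith [hi.2], ?_⟩
    exact ((pathLE_around_hole hp hi.1 hi.2 fun k hk hck => hlowest k ⟨hk, hck⟩).trans hpath
      (by linarith [hi.1.1, hi.2]) (by linarith)).mono (by linarith)

variable (D) in
def neg : BoxHoleDomain ι where
  outer := -D.outer
  a i := -D.b i
  b i := -D.a i
  c i := -D.d i
  d i := -D.c i
  convex_outer := D.convex_outer.neg
  isCompact_outer := D.isCompact_outer.neg
  a_le_b i := neg_le_neg (D.a_le_b i)
  c_lt_d i := neg_lt_neg (D.c_lt_d i)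
  pairwise_disjoint i j hij := by
    change Disjoint (box _ _ _ _) (box _ _ _ _)
    rw [← neg_box, ← neg_box]
    exact (D.pairwise_disjoint hij).preimage Neg.neg
  box_subset_interior i := by
    rw [← neg_box, ← neg_interior]
    exact neg_subset_neg.2 (D.box_subset_interior i)

lemma neg_carrier : D.neg.carrier = -D.carrier := by
  ext p
  simp [carrier, hole, neg, ← neg_box, ← neg_interior]

lemma exists_escape_down_right [Fintype ι] {p : Plane} (hp : p ∈ D.carrier) :
    ∃ q ∈ frontier D.outer, p 0 ≤ q 0 ∧ q 1 ≤ p 1 ∧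
      PathLE D.carrier p q (p 1 - q 1 + (q 0 - p 0)) := by
  obtain ⟨q, hq, hq0, hq1, hpath⟩ :=
    D.neg.exists_escape_up_left (p := -p) (by rw [neg_carrier]; simpa using hp)
  refine ⟨-q, by simpa [neg, ← neg_frontier] using hq, by simpa using neg_le_neg hq0,
    by simpa using neg_le_neg hq1, ?_⟩
  have hback := hpath.neg
  rw [neg_carrier, neg_neg, neg_neg] at hback
  exact hback.mono (by simp; linarith)

theorem exists_pathLE_frontier_le_diam [Fintype ι] {s : Plane} (hs : s ∈ D.carrier) :
    ∃ q ∈ frontier D.outer, PathLE D.carrier s q (diam D.carrier) := by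
  obtain ⟨q₁, hq₁, hq₁0, hq₁1, hpath₁⟩ := exists_escape_up_left hs
  obtain ⟨q₂, hq₂, hq₂0, hq₂1, hpath₂⟩ := exists_escape_down_right hs
  have hdist : dist q₁ q₂ ≤ diam D.carrier :=
    dist_le_diam_of_mem (D.isCompact_outer.isBounded.subset sdiff_subset)
      (frontier_outer_subset_carrier hq₁) (frontier_outer_subset_carrier hq₂)
  have hsum : q₁ 1 - s 1 + (s 0 - q₁ 0) + (s 1 - q₂ 1 + (q₂ 0 - s 0)) ≤ 2 * diam D.carrier := by
    linarith [le_abs_self (q₁ 1 - q₂ 1), neg_abs_le (q₁ 0 - q₂ 0),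
      abs_sub_apply_le_dist q₁ q₂ 0, abs_sub_apply_le_dist q₁ q₂ 1]
  by_cases hshorter : q₁ 1 - s 1 + (s 0 - q₁ 0) ≤ s 1 - q₂ 1 + (q₂ 0 - s 0)
  · exact ⟨q₁, hq₁, hpath₁.mono (by linarith)⟩
  · exact ⟨q₂, hq₂, hpath₂.mono (by linarith)⟩

end BoxHoleDomain

/-- Let `P = P₀ \ ⋃ᵢ interior Pᵢ`, where `P₀` is a convex polygon and each
hole `Pᵢ` is a closed axis-aligned rectangle `[aᵢ,bᵢ] × [cᵢ,dᵢ]` with nonempty interior, the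
rectangles being pairwise disjoint and contained in the interior of `P₀`. Then from every
`s ∈ P` there is a continuous path in `P` to `frontier P₀` of length at most `diam₂(P)`. -/
theorem escape_path_axis_aligned
    (h : ℕ) (P₀ : Set Plane) (Q : Fin h → Set Plane)
    (a b c d : Fin h → ℝ)
    (hP₀ : IsConvexPolygon P₀)
    (hrect : ∀ i, Q i = {p : Plane | p 0 ∈ Set.Icc (a i) (b i) ∧ p 1 ∈ Set.Icc (c i) (d i)})
    (hne : ∀ i, a i < b i ∧ c i < d i)
    (hdisj : Pairwise (Function.onFun Disjoint Q))
    (hsub : ∀ i, Q i ⊆ interior P₀) :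
    ∀ s ∈ (P₀ \ ⋃ i, interior (Q i)),
      ∃ γ : ℝ → Plane,
        ContinuousOn γ (Set.Icc 0 1) ∧ γ 0 = s ∧ γ 1 ∈ frontier P₀ ∧
        Set.MapsTo γ (Set.Icc 0 1) (P₀ \ ⋃ i, interior (Q i)) ∧
        pathLen γ ≤ ENNReal.ofReal (Metric.diam (P₀ \ ⋃ i, interior (Q i))) := by
  obtain ⟨S, -, rfl⟩ := hP₀
  obtain rfl : Q = fun i => box (a i) (b i) (c i) (d i) := funext hrect
  let D : BoxHoleDomain (Fin h) :=
    { outer := convexHull ℝ S, a, b, c, d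
      convex_outer := convex_convexHull ℝ _
      isCompact_outer := S.finite_toSet.isCompact_convexHull (𝕜 := ℝ)
      a_le_b := fun i => (hne i).1.le
      c_lt_d := fun i => (hne i).2
      pairwise_disjoint := hdisj
      box_subset_interior := hsub }
  intro s hs
  obtain ⟨q, hq, γ, ⟨hcont, hstart, hend, hmaps⟩, hlen⟩ := D.exists_pathLE_frontier_le_diam hs
  exact ⟨γ, hcont, hstart, hend ▸ hq, hmaps, hlen⟩
end
end
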